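/- arXiv:1101.5876 — 2 statements merged into one kernel-verified Lean document; each statement's English description precedes it below -/
import Mathlib

section
/- Let P be a path with colouring ω from colour-set C, and let P' with colouring ω' be obtained from P by deleting one internal or end vertex and joining its neighbours (each remaining vertex keeping its colour). Then for every colour d in C, the minimum number of flooding moves to make P' monochromatic in colour d is at most the minimum number to make P monochromatic in colour d. In particular m(P',ω') ≤ m(P,ω). -/
/-!
Deleting vertex `i` restricts the colouring along the monotone embedding `Fin.succAbove i`.
Along any monotone map `f` between paths, a move `(v, c)` on the long path is shadowed by at most
one move on the short path: if the component of `v` meets the image of `f`, say at `f u₀`, flood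
the component of `u₀` with `c` (otherwise the move changes nothing on the image). That component
is an interval, so collapsing it onto `f u₀` keeps the map monotone, and the new colouring of the
short path is again the pullback of the new colouring of the long path. Hence every flooding
sequence of the long path yields one of at most the same length on the short path, in the same
final colour.
-/

namespace Flood

variable {V C : Type*}

/-- Two vertices are joined by an edge inside a monochromatic class. -/
def monoAdj (G : SimpleGraph V) (ω : V → C) (a b : V) : Prop :=
  G.Adj a b ∧ ω a = ω b

/-- `u` and `v` lie in a common monochromatic component of the colouring `ω`. -/
def monoLinked (G : SimpleGraph V) (ω : V → C) (u v : V) : Prop :=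
  Relation.ReflTransGen (monoAdj G ω) u v

/-- One flooding move: recolour the monochromatic component of `v` with colour `d`. -/
noncomputable def floodMove (G : SimpleGraph V) (ω : V → C) (v : V) (d : C) : V → C :=
  fun u => @ite _ (monoLinked G ω v u) (Classical.propDecidable _) d (ω u)

/-- Apply a sequence of flooding moves. -/
noncomputable def floodSeq (G : SimpleGraph V) (ω : V → C) (S : List (V × C)) : V → C :=
  S.foldl (fun ω' m => floodMove G ω' m.1 m.2) ω

/-- The sequence `S` floods `G`, i.e. makes it monochromatic. -/
def Floods (G : SimpleGraph V) (ω : V → C) (S : List (V × C)) : Prop :=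
  ∀ a b, floodSeq G ω S a = floodSeq G ω S b

/-- Minimum number of moves needed to make `G` monochromatic. -/
noncomputable def floodCost (G : SimpleGraph V) (ω : V → C) : ℕ :=
  sInf {k | ∃ S, S.length = k ∧ Floods G ω S}

/-- Minimum number of moves needed to make `G` monochromatic in colour `d`. -/
noncomputable def floodCostIn (G : SimpleGraph V) (ω : V → C) (d : C) : ℕ :=
  sInf {k | ∃ S, S.length = k ∧ ∀ a, floodSeq G ω S a = d}

/-- The sequence `S` links `u` and `v`. -/
def Links (G : SimpleGraph V) (ω : V → C) (S : List (V × C)) (u v : V) : Prop :=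
  monoLinked G (floodSeq G ω S) u v

/-- Minimum number of moves needed to link `u` and `v`. -/
noncomputable def linkCost (G : SimpleGraph V) (ω : V → C) (u v : V) : ℕ :=
  sInf {k | ∃ S, S.length = k ∧ Links G ω S u v}

/-- Minimum number of moves needed to link `u` and `v` in a monochromatic
component of colour `d`. -/
noncomputable def linkCostIn (G : SimpleGraph V) (ω : V → C) (u v : V) (d : C) : ℕ :=
  sInf {k | ∃ S, S.length = k ∧ Links G ω S u v ∧ floodSeq G ω S u = d}


end Flood

open Flood

namespace Flood

variable {V W C : Type*}

section General

variable {G : SimpleGraph V} {ω : V → C}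

@[simp]
lemma floodSeq_nil : floodSeq G ω [] = ω := rfl

@[simp]
lemma floodSeq_cons (m : V × C) (S : List (V × C)) :
    floodSeq G ω (m :: S) = floodSeq G (floodMove G ω m.1 m.2) S := rfl

lemma floodSeq_append (S T : List (V × C)) :
    floodSeq G ω (S ++ T) = floodSeq G (floodSeq G ω S) T :=
  List.foldl_append

lemma apply_eq_of_monoLinked {a b : V} (h : monoLinked G ω a b) : ω a = ω b := by
  induction h with
  | refl => rfl
  | tail _ hadj ih => exact ih.trans hadj.2

lemma monoLinked_symm {a b : V} (h : monoLinked G ω a b) : monoLinked G ω b a :=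
  haveI : Std.Symm (monoAdj G ω) := ⟨fun _ _ h => ⟨h.1.symm, h.2.symm⟩⟩
  Std.Symm.symm (r := Relation.ReflTransGen (monoAdj G ω)) _ _ h

lemma floodMove_of_monoLinked {v u : V} {d : C} (h : monoLinked G ω v u) :
    floodMove G ω v d u = d :=
  if_pos h

lemma floodMove_of_not_monoLinked {v u : V} {d : C} (h : ¬ monoLinked G ω v u) :
    floodMove G ω v d u = ω u :=
  if_neg h

lemma floodMove_of_apply_eq {v u : V} {d : C} (h : ω u = d) : floodMove G ω v d u = d := by
  by_cases hvu : monoLinked G ω v u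
  · exact floodMove_of_monoLinked hvu
  · rwa [floodMove_of_not_monoLinked hvu]

lemma floodSeq_map_of_apply_eq_or_mem (d : C) (l : List V) (ω : V → C) {a : V}
    (ha : ω a = d ∨ a ∈ l) : floodSeq G ω (l.map (·, d)) a = d := by
  induction l generalizing ω with
  | nil => simpa using ha
  | cons v l ih =>
    refine ih _ ?_
    rw [List.mem_cons] at ha
    rcases ha with ha | rfl | ha
    · exact .inl (floodMove_of_apply_eq ha)
    · exact .inl (floodMove_of_monoLinked .refl)
    · exact .inr ha

lemma exists_floodSeq_eq_const [Finite V] (G : SimpleGraph V) (ω : V → C) (d : C) :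
    ∃ S, ∀ a, floodSeq G ω S a = d := by
  obtain ⟨l, -, hl⟩ := Finite.exists_univ_list V
  exact ⟨l.map (·, d), fun a => floodSeq_map_of_apply_eq_or_mem d l ω (.inr (hl a))⟩

lemma exists_floods [Finite V] (G : SimpleGraph V) (ω : V → C) : ∃ S, Floods G ω S := by
  rcases isEmpty_or_nonempty V with hV | ⟨⟨v⟩⟩
  · exact ⟨[], fun a => hV.elim a⟩
  · obtain ⟨S, hS⟩ := exists_floodSeq_eq_const G ω (ω v)
    exact ⟨S, fun a b => (hS a).trans (hS b).symm⟩

lemma sInf_lengths_le {α β : Type*} {p : List α → Prop} {q : List β → Prop}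
    (hp : ∃ S, p S) (hpq : ∀ S, p S → ∃ S', q S' ∧ S'.length ≤ S.length) :
    sInf {k | ∃ S, S.length = k ∧ q S} ≤ sInf {k | ∃ S, S.length = k ∧ p S} := by
  obtain ⟨S, hS⟩ := hp
  have hne : {k | ∃ S, S.length = k ∧ p S}.Nonempty := ⟨_, S, rfl, hS⟩
  obtain ⟨T, hlen, hT⟩ := Nat.sInf_mem hne
  obtain ⟨T', hT', hle⟩ := hpq T hT
  calc sInf {k | ∃ S, S.length = k ∧ q S} ≤ T'.length := Nat.sInf_le ⟨T', rfl, hT'⟩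
    _ ≤ _ := hlen ▸ hle

variable {G' : SimpleGraph W} {ω' : W → C}

def FloodSimulates (G' : SimpleGraph W) (ω' : W → C) (G : SimpleGraph V) (ω : V → C) : Prop :=
  ∀ S : List (V × C), ∃ S' : List (W × C), ∃ f : W → V,
    S'.length ≤ S.length ∧ floodSeq G' ω' S' = floodSeq G ω S ∘ f

lemma FloodSimulates.floodCostIn_le [Finite V] (hsim : FloodSimulates G' ω' G ω) (d : C) :
    floodCostIn G' ω' d ≤ floodCostIn G ω d :=
  sInf_lengths_le (exists_floodSeq_eq_const G ω d) fun S hS =>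
    let ⟨S', _, hle, heq⟩ := hsim S
    ⟨S', fun a => by rw [heq]; exact hS _, hle⟩

lemma FloodSimulates.floodCost_le [Finite V] (hsim : FloodSimulates G' ω' G ω) :
    floodCost G' ω' ≤ floodCost G ω :=
  sInf_lengths_le (exists_floods G ω) fun S hS =>
    let ⟨S', _, hle, heq⟩ := hsim S
    ⟨S', fun a b => by rw [heq]; exact hS _ _, hle⟩

end General

section Hasse

open SimpleGraph Set Order

variable {α β : Type*} [LinearOrder α] [LinearOrder β] {ω : α → C}

lemma apply_eq_of_monoLinked_hasse {a b x : α} (h : monoLinked (hasse α) ω a b)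
    (hx : x ∈ uIcc a b) : ω x = ω a := by
  induction h generalizing x with
  | refl => rw [uIcc_self, mem_singleton_iff] at hx; rw [hx]
  | @tail p q _ hpq ih =>
    have hIcc : uIcc p q = {p, q} := by
      rcases hasse_adj.1 hpq.1 with h | h
      · rw [uIcc_of_le h.le, h.Icc_eq]
      · rw [uIcc_comm, uIcc_of_le h.le, h.Icc_eq, pair_comm]
    rcases uIcc_subset_uIcc_union_uIcc hx with hx | hx
    · exact ih hx
    · rw [hIcc] at hx
      rcases hx with rfl | rfl
      · exact ih right_mem_uIcc
      · exact hpq.2.symm.trans (ih right_mem_uIcc)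

lemma monoLinked_hasse_of_forall_uIcc [SuccOrder α] [IsSuccArchimedean α] {a b : α}
    (h : ∀ x ∈ uIcc a b, ω x = ω a) : monoLinked (hasse α) ω a b := by
  have step : ∀ i ∈ uIcc a b, ∀ j ∈ uIcc a b, i < j → monoAdj (hasse α) ω i (succ i) := by
    intro i hi j hj hij
    have hsucc : succ i ∈ uIcc a b := ordConnected_uIcc.out hi hj ⟨le_succ i, succ_le_of_lt hij⟩
    exact ⟨hasse_adj.2 (.inl (covBy_succ_of_not_isMax (not_isMax_of_lt hij))),
      (h i hi).trans (h _ hsucc).symm⟩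
  refine reflTransGen_of_succ _ (fun i hi => ?_) (fun i hi => ?_)
  · exact step i (Icc_subset_uIcc (Ico_subset_Icc_self hi)) b right_mem_uIcc hi.2
  · have ⟨hadj, hcol⟩ := step i (Icc_subset_uIcc' (Ico_subset_Icc_self hi)) a left_mem_uIcc hi.2
    exact ⟨hadj.symm, hcol.symm⟩

lemma ordConnected_setOf_monoLinked_hasse [SuccOrder α] [IsSuccArchimedean α] (a : α) :
    {x | monoLinked (hasse α) ω a x}.OrdConnected :=
  ordConnected_of_uIcc_subset_left fun _ hy _ hz =>
    monoLinked_hasse_of_forall_uIcc fun _ hx =>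
      apply_eq_of_monoLinked_hasse hy (uIcc_subset_uIcc_left hz hx)

lemma monoLinked_hasse_comp [SuccOrder β] [IsSuccArchimedean β] {f : β → α} (hf : Monotone f)
    {a b : β} (h : monoLinked (hasse α) ω (f a) (f b)) : monoLinked (hasse β) (ω ∘ f) a b :=
  monoLinked_hasse_of_forall_uIcc fun _ hx =>
    apply_eq_of_monoLinked_hasse (α := α) h (hf.mapsTo_uIcc hx)

lemma _root_.Monotone.ite_mem_of_ordConnected {f : β → α} (hf : Monotone f) {s : Set β}
    [DecidablePred (· ∈ s)] (hs : s.OrdConnected) {a : β} (ha : a ∈ s) :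
    Monotone fun x => if x ∈ s then f a else f x := by
  intro x y hxy
  dsimp only
  split_ifs with hx hy hy
  · exact le_rfl
  · exact hf (le_of_not_gt fun hya => hy (hs.out hx ha ⟨hxy, hya.le⟩))
  · exact hf (le_of_not_gt fun hax => hx (hs.out ha hy ⟨hax.le, hxy⟩))
  · exact hf hxy

lemma exists_floodMove_comp_monotone [SuccOrder β] [IsSuccArchimedean β] {f : β → α}
    (hf : Monotone f) (v : α) (c : C) :
    ∃ S : List (β × C), S.length ≤ 1 ∧ ∃ g : β → α, Monotone g ∧
      floodSeq (hasse β) (ω ∘ f) S = floodMove (hasse α) ω v c ∘ g := by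
  classical
  by_cases hv : ∃ u₀, monoLinked (hasse α) ω v (f u₀)
  · obtain ⟨u₀, hu₀⟩ := hv
    set K := {u | monoLinked (hasse β) (ω ∘ f) u₀ u}
    refine ⟨[(u₀, c)], le_rfl, fun u => if u ∈ K then f u₀ else f u,
      hf.ite_mem_of_ordConnected (ordConnected_setOf_monoLinked_hasse u₀) .refl, funext fun u => ?_⟩
    by_cases hu : u ∈ K
    · simp only [floodSeq_cons, floodSeq_nil, Function.comp_apply, if_pos hu]
      rw [floodMove_of_monoLinked hu, floodMove_of_monoLinked hu₀]
    · have hvu : ¬ monoLinked (hasse α) ω v (f u) := fun h =>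
        hu (monoLinked_hasse_comp hf ((monoLinked_symm hu₀).trans h))
      simp only [floodSeq_cons, floodSeq_nil, Function.comp_apply, if_neg hu]
      rw [floodMove_of_not_monoLinked hu, floodMove_of_not_monoLinked hvu, Function.comp_apply]
  · refine ⟨[], zero_le_one, f, hf, funext fun u => ?_⟩
    exact (floodMove_of_not_monoLinked fun h => hv ⟨u, h⟩).symm

lemma exists_floodSeq_comp_monotone [SuccOrder β] [IsSuccArchimedean β] (S : List (α × C))
    {f : β → α} (hf : Monotone f) :
    ∃ S' : List (β × C), S'.length ≤ S.length ∧ ∃ g : β → α, Monotone g ∧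
      floodSeq (hasse β) (ω ∘ f) S' = floodSeq (hasse α) ω S ∘ g := by
  induction S generalizing ω f with
  | nil => exact ⟨[], le_rfl, f, hf, rfl⟩
  | cons m S ih =>
    obtain ⟨T, hT, g, hg, hTg⟩ := exists_floodMove_comp_monotone (ω := ω) hf m.1 m.2
    obtain ⟨T', hT', g', hg', hTg'⟩ := ih hg
    refine ⟨T ++ T', ?_, g', hg', ?_⟩
    · simp only [List.length_append, List.length_cons]
      omega
    · rw [floodSeq_append, hTg, hTg', floodSeq_cons]

lemma floodSimulates_hasse_comp [SuccOrder β] [IsSuccArchimedean β] {f : β → α}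
    (hf : Monotone f) : FloodSimulates (hasse β) (ω ∘ f) (hasse α) ω := fun S =>
  let ⟨S', hle, g, _, heq⟩ := exists_floodSeq_comp_monotone S hf
  ⟨S', g, hle, heq⟩

end Hasse

end Flood

/-- monotonicity for paths: deleting a vertex from a coloured
path and joining its neighbours cannot increase the number of moves needed to
flood the path in any given colour `d`, nor the number needed to flood it in
some colour. -/
theorem path_deletion_monotone {C : Type*} (n : ℕ)
    (ω : Fin (n + 1) → C) (i : Fin (n + 1)) :
    (∀ d : C,
      floodCostIn (SimpleGraph.pathGraph n) (ω ∘ i.succAbove) d ≤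
        floodCostIn (SimpleGraph.pathGraph (n + 1)) ω d) ∧
    floodCost (SimpleGraph.pathGraph n) (ω ∘ i.succAbove) ≤
      floodCost (SimpleGraph.pathGraph (n + 1)) ω := by
  have hsim : FloodSimulates (SimpleGraph.pathGraph n) (ω ∘ i.succAbove)
      (SimpleGraph.pathGraph (n + 1)) ω :=
    floodSimulates_hasse_comp (Fin.strictMono_succAbove i).monotone
  exact ⟨hsim.floodCostIn_le, hsim.floodCost_le⟩
end

section
/- Let G be a connected coloured graph and S a sequence of flooding moves that links vertices u and v (places them in a common monochromatic component). Then there exists a u-v path P in G that is critical with respect to S: for every pair of vertices x, y on P, the sequence S does not link x and y in G strictly before x and y become linked along P (i.e. before the subpath of P between x and y is monochromatic). -/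
namespace Flood

variable {V C : Type*}

/-- `x` and `y` are linked along the given edge set: they are joined by a
monochromatic chain using only those edges. -/
def monoLinkedAlong (edges : List (Sym2 V)) (ω : V → C) (x y : V) : Prop :=
  Relation.ReflTransGen (fun a b => s(a, b) ∈ edges ∧ ω a = ω b) x y

/-- A walk `P` is critical with respect to a move sequence `S`: at no point of
the play are two vertices of `P` linked in `G` without being linked along `P`. -/
def Critical (G : SimpleGraph V) (ω : V → C) (S : List (V × C))
    {u v : V} (P : G.Walk u v) : Prop :=
  ∀ x ∈ P.support, ∀ y ∈ P.support, ∀ k : ℕ,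
    monoLinked G (floodSeq G ω (S.take k)) x y →
      monoLinkedAlong P.edges (floodSeq G ω (S.take k)) x y

end Flood

open Flood

/-! Give every edge the first time at which `S` links its endpoints (`⊤` if never) and choose a
`u`-`v` walk `P` whose multiset of edge times is minimal in the Dershowitz–Manna order. Cutting a
cycle out of `P` only deletes edges, so `P` is a path. If two vertices `x`, `y` of `P` are linked
after `k` moves but not along `P`, some edge of `P` between them has time `> k`; replacing that
stretch of `P` by a monochromatic `x`-`y` walk after `k` moves, all of whose edges have time
`≤ k`, would make the multiset smaller. -/

theorem ENat.sInf_image_natCast_le_iff {p : ℕ → Prop} (hp : Monotone p) (k : ℕ) :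
    sInf (((↑) : ℕ → ℕ∞) '' {j | p j}) ≤ k ↔ p k := by
  refine ⟨fun h => ?_, fun hk => sInf_le ⟨k, hk, rfl⟩⟩
  have hne : {j | p j}.Nonempty := by
    by_contra hempty
    rw [Set.not_nonempty_iff_eq_empty.mp hempty, Set.image_empty, sInf_empty] at h
    exact ENat.top_ne_natCast k (top_le_iff.mp h).symm
  obtain ⟨j, hj, hjk⟩ := csInf_mem (hne.image ((↑) : ℕ → ℕ∞))
  rw [← hjk, Nat.cast_le] at h
  exact hp h hj

theorem Multiset.isDershowitzMannaLT_of_lt {α : Type*} [Preorder α] {s t : Multiset α}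
    (h : s < t) : s.IsDershowitzMannaLT t := by
  classical
  refine ⟨s, 0, t - s, ?_, (add_zero s).symm, (add_tsub_cancel_of_le h.le).symm, by simp⟩
  exact fun hts => h.not_ge (tsub_eq_zero_iff_le.mp hts)

theorem SimpleGraph.Walk.exists_eq_append_append {V : Type*} {G : SimpleGraph V} {u v x y : V}
    {P : G.Walk u v} (hx : x ∈ P.support) (hy : y ∈ P.support) :
    (∃ (A : G.Walk u x) (M : G.Walk x y) (B : G.Walk y v), P = A.append (M.append B)) ∨
      ∃ (A : G.Walk u y) (M : G.Walk y x) (B : G.Walk x v), P = A.append (M.append B) := by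
  classical
  rw [← P.take_spec hx] at hy ⊢
  rcases (SimpleGraph.Walk.mem_support_append_iff _ _).mp hy with hyA | hyB
  · refine .inr ⟨(P.takeUntil x hx).takeUntil y hyA, (P.takeUntil x hx).dropUntil y hyA,
      P.dropUntil x hx, ?_⟩
    rw [SimpleGraph.Walk.append_assoc, (P.takeUntil x hx).take_spec hyA]
  · exact .inl ⟨_, _, _, by rw [(P.dropUntil x hx).take_spec hyB]⟩

namespace Flood

open SimpleGraph

variable {V C : Type*} {G : SimpleGraph V} {ω : V → C} {S : List (V × C)} {u v x y : V}

theorem monoLinked.symm (h : monoLinked G ω x y) : monoLinked G ω y x :=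
  Relation.ReflTransGen.mono (fun _ _ hab => ⟨hab.1.symm, hab.2.symm⟩) _ _
    (Relation.ReflTransGen.swap _ _ h)

theorem monoLinked.colour_eq (h : monoLinked G ω x y) : ω x = ω y := by
  induction h with
  | refl => rfl
  | tail _ hbc ih => exact ih.trans hbc.2

theorem monoLinkedAlong.symm {E : List (Sym2 V)} (h : monoLinkedAlong E ω x y) :
    monoLinkedAlong E ω y x :=
  Relation.ReflTransGen.mono (fun _ _ hab => ⟨Sym2.eq_swap ▸ hab.1, hab.2.symm⟩) _ _
    (Relation.ReflTransGen.swap _ _ h)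

theorem monoLinkedAlong.mono {E E' : List (Sym2 V)} (hE : E ⊆ E')
    (h : monoLinkedAlong E ω x y) : monoLinkedAlong E' ω x y :=
  Relation.ReflTransGen.mono (fun _ _ hab => ⟨hE hab.1, hab.2⟩) _ _ h

theorem monoAdj.floodMove {a b w : V} {d : C} (h : monoAdj G ω a b) :
    monoAdj G (floodMove G ω w d) a b := by
  refine ⟨h.1, ?_⟩
  by_cases hwa : monoLinked G ω w a
  · have hwb : monoLinked G ω w b := hwa.tail h
    simp only [Flood.floodMove]
    rw [if_pos hwa, if_pos hwb]
  · have hwb : ¬ monoLinked G ω w b := fun hwb => hwa (hwb.tail ⟨h.1.symm, h.2.symm⟩)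
    simp only [Flood.floodMove, if_neg hwa, if_neg hwb, h.2]

theorem monoLinked.floodSeq (h : monoLinked G ω x y) (T : List (V × C)) :
    monoLinked G (floodSeq G ω T) x y := by
  induction T generalizing ω with
  | nil => exact h
  | cons m T ih => exact ih (Relation.ReflTransGen.mono (fun _ _ hab => hab.floodMove) _ _ h)

theorem monoLinked.reachable (h : monoLinked G ω x y) : G.Reachable x y :=
  (SimpleGraph.reachable_iff_reflTransGen x y).mpr
    (Relation.ReflTransGen.mono (fun _ _ hab => hab.1) _ _ h)

theorem links_take_monotone : Monotone fun k => Links G ω (S.take k) x y := by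
  intro j k hjk h
  obtain ⟨n, rfl⟩ := Nat.exists_eq_add_of_le hjk
  simpa only [Links, Flood.floodSeq, List.take_add, List.foldl_append] using h.floodSeq _

theorem links_comm {T : List (V × C)} : Links G ω T x y ↔ Links G ω T y x :=
  ⟨monoLinked.symm, monoLinked.symm⟩

/-- The least `k` such that the first `k` moves of `S` link the endpoints; `⊤` if there is none. -/
noncomputable def linkTime (G : SimpleGraph V) (ω : V → C) (S : List (V × C)) : Sym2 V → ℕ∞ :=
  Sym2.lift ⟨fun x y => sInf ((↑) '' {k | Links G ω (S.take k) x y}),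
    fun x y => by simp only [links_comm]⟩

theorem linkTime_mk_le_iff {k : ℕ} : linkTime G ω S s(x, y) ≤ k ↔ Links G ω (S.take k) x y :=
  ENat.sInf_image_natCast_le_iff links_take_monotone k

theorem monoLinkedAlong_of_forall_linkTime_le {k : ℕ} {P : G.Walk x y}
    (h : ∀ e ∈ P.edges, linkTime G ω S e ≤ k) :
    monoLinkedAlong P.edges (floodSeq G ω (S.take k)) x y := by
  induction P with
  | nil => exact .refl
  | @cons a b c hab P ih =>
    have hlinked := linkTime_mk_le_iff.mp (h s(a, b) (by simp))
    refine .head ⟨by simp, hlinked.colour_eq⟩ ((ih fun e he => h e (by simp [he])).mono ?_)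
    exact List.subset_cons_self _ _

theorem exists_walk_forall_linkTime_le {k : ℕ} (h : Links G ω (S.take k) x y) :
    ∃ Q : G.Walk x y, ∀ e ∈ Q.edges, linkTime G ω S e ≤ k := by
  induction h with
  | refl => exact ⟨.nil, by simp⟩
  | @tail b c _ hbc ih =>
    obtain ⟨Q, hQ⟩ := ih
    refine ⟨Q.concat hbc.1, fun e he => ?_⟩
    rw [Walk.edges_concat, List.concat_eq_append, List.mem_append, List.mem_singleton] at he
    rcases he with he | rfl
    · exact hQ e he
    · exact linkTime_mk_le_iff.mpr (.single hbc)

noncomputable def linkTimes (G : SimpleGraph V) (ω : V → C) (S : List (V × C)) {u v : V}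
    (P : G.Walk u v) : Multiset ℕ∞ :=
  P.edges.map (linkTime G ω S)

theorem linkTimes_append {w : V} (P : G.Walk u w) (Q : G.Walk w v) :
    linkTimes G ω S (P.append Q) = linkTimes G ω S P + linkTimes G ω S Q := by
  simp [linkTimes, Walk.edges_append]

def IsLinkTimeMinimal (G : SimpleGraph V) (ω : V → C) (S : List (V × C)) (P : G.Walk u v) :
    Prop :=
  ∀ P' : G.Walk u v, ¬ (linkTimes G ω S P').IsDershowitzMannaLT (linkTimes G ω S P)

theorem exists_isLinkTimeMinimal (ω : V → C) (S : List (V × C)) (h : G.Reachable u v) :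
    ∃ P : G.Walk u v, IsLinkTimeMinimal G ω S P := by
  obtain ⟨_, ⟨P, rfl⟩, hP⟩ := Multiset.wellFounded_isDershowitzMannaLT.has_min
    (Set.range (linkTimes G ω S)) (Set.range_nonempty_iff_nonempty.mpr h)
  exact ⟨P, fun P' hP' => hP _ ⟨P', rfl⟩ hP'⟩

namespace IsLinkTimeMinimal

variable {P : G.Walk u v}

theorem isPath (hP : IsLinkTimeMinimal G ω S P) : P.IsPath := by
  classical
  have hle : linkTimes G ω S P.bypass ≤ linkTimes G ω S P :=
    Multiset.coe_le.mpr (P.edges_bypass_sublist_edges.map _).subperm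
  by_cases hlen : P.length ≤ P.bypass.length
  · rw [← P.bypass_eq_self_of_length_le_length_bypass hlen]
    exact P.bypass_isPath
  · refine absurd (Multiset.isDershowitzMannaLT_of_lt (hle.lt_of_ne fun heq => hlen ?_)) (hP _)
    simpa [linkTimes] using (congrArg Multiset.card heq).ge

theorem forall_linkTime_le (hP : IsLinkTimeMinimal G ω S P) (A : G.Walk u x) (M : G.Walk x y)
    (B : G.Walk y v) (hAMB : P = A.append (M.append B)) {k : ℕ}
    (hk : Links G ω (S.take k) x y) : ∀ e ∈ M.edges, linkTime G ω S e ≤ k := by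
  subst hAMB
  by_contra! ⟨e, he, hke⟩
  obtain ⟨Q, hQ⟩ := exists_walk_forall_linkTime_le hk
  have hmem : linkTime G ω S e ∈ linkTimes G ω S M := Multiset.mem_coe.mpr (List.mem_map_of_mem he)
  refine hP (A.append (Q.append B))
    ⟨linkTimes G ω S A + linkTimes G ω S B, linkTimes G ω S Q, linkTimes G ω S M,
      by rintro h0; simp [h0] at hmem, ?_, ?_, ?_⟩
  · simp only [linkTimes_append]
    abel
  · simp only [linkTimes_append]
    abel
  · intro t ht
    obtain ⟨e', he', rfl⟩ := List.mem_map.mp ht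
    exact ⟨_, hmem, (hQ e' he').trans_lt hke⟩

theorem monoLinkedAlong_of_links (hP : IsLinkTimeMinimal G ω S P) (A : G.Walk u x)
    (M : G.Walk x y) (B : G.Walk y v) (hAMB : P = A.append (M.append B)) {k : ℕ}
    (hk : Links G ω (S.take k) x y) : monoLinkedAlong P.edges (floodSeq G ω (S.take k)) x y := by
  refine (monoLinkedAlong_of_forall_linkTime_le (hP.forall_linkTime_le A M B hAMB hk)).mono ?_
  intro e he
  simp [hAMB, Walk.edges_append, he]

theorem critical (hP : IsLinkTimeMinimal G ω S P) : Critical G ω S P := by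
  intro x hx y hy k hk
  rcases Walk.exists_eq_append_append hx hy with ⟨A, M, B, hAMB⟩ | ⟨A, M, B, hAMB⟩
  · exact hP.monoLinkedAlong_of_links A M B hAMB hk
  · exact (hP.monoLinkedAlong_of_links A M B hAMB hk.symm).symm

end IsLinkTimeMinimal

end Flood

theorem exists_critical_path_general {V C : Type*}
    (G : SimpleGraph V) (ω : V → C)
    (u v : V) (S : List (V × C)) (hS : Links G ω S u v) :
    ∃ P : G.Walk u v, P.IsPath ∧ Critical G ω S P := by
  obtain ⟨P, hP⟩ := exists_isLinkTimeMinimal ω S hS.reachable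
  exact ⟨P, hP.isPath, hP.critical⟩

/-- if a sequence of moves links `u` and `v` in a connected
coloured graph, then there is a critical `u`-`v` path with respect to it. -/
theorem exists_critical_path {V C : Type*}
    (G : SimpleGraph V) (hG : G.Connected) (ω : V → C)
    (u v : V) (S : List (V × C)) (hS : Links G ω S u v) :
    ∃ P : G.Walk u v, P.IsPath ∧ Critical G ω S P :=
  exists_critical_path_general G ω u v S hS
end
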